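/- arXiv:2301.01654 — 2 statements merged into one kernel-verified Lean document; each statement's English description precedes it below -/
import Mathlib

section
/- Let B be the Borel subgroup of GL₃(F) consisting of invertible upper-triangular matrices. Then the set {(d, v·d + d²) : v ∈ F} ∪ {(d², d)} is a fundamental domain for the action of B on H_q: every (α, β) ∈ H_q lies in the B-orbit of exactly one element of this set. -/
/-- The finite upper half-space: pairs `(α, β)` with `1, α, β` linearly
independent over `F`. -/
def UHS (F : Type*) [Field F] (E : Type*) [Field E] [Algebra F E] : Set (E × E) :=
  {z | LinearIndependent F ![1, z.1, z.2]}

/-- The denominator of the fractional linear action. -/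
def mden (F : Type*) [Field F] (E : Type*) [Field E] [Algebra F E]
    (M : Matrix (Fin 3) (Fin 3) F) (z : E × E) : E :=
  algebraMap F E (M 2 0) * z.1 + algebraMap F E (M 2 1) * z.2 + algebraMap F E (M 2 2)

/-- The fractional linear action of a `3 × 3` matrix on a pair. -/
def mact (F : Type*) [Field F] (E : Type*) [Field E] [Algebra F E]
    (M : Matrix (Fin 3) (Fin 3) F) (z : E × E) : E × E :=
  ((algebraMap F E (M 0 0) * z.1 + algebraMap F E (M 0 1) * z.2 + algebraMap F E (M 0 2)) /
      mden F E M z,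
   (algebraMap F E (M 1 0) * z.1 + algebraMap F E (M 1 1) * z.2 + algebraMap F E (M 1 2)) /
      mden F E M z)

/-!
Write `α = a₀ + a₁ d + a₂ d²` and `β = b₀ + b₁ d + b₂ d²` in the basis `1, d, d²`. An upper
triangular matrix acts on the second coordinate by the affine map `β ↦ (m₁₁ β + m₁₂) / m₂₂`,
so the point `[b₁ : b₂]` of `ℙ¹(F)` is an invariant of the Borel orbit of `(α, β)`; it is
realised by exactly one of the pairs `(d, v d + d²)` (when `b₂ ≠ 0`, with `v = b₁ / b₂`) and
`(d², d)` (when `b₂ = 0`). Conversely, the first coordinate can be adjusted freely by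
`α ↦ m₀₀ α + m₀₁ β + m₀₂`, and linear independence of `1, α, β` says exactly that
`a₁ b₂ - a₂ b₁ ≠ 0`, which is what makes the required matrix invertible.
-/

open IntermediateField Module

section

variable {F E : Type*} [Field F] [Field E] [Algebra F E]

theorem linearIndependent_one_self_sq_of_finrank_eq_three (h3 : finrank F E = 3) {d : E}
    (hd : d ∉ Set.range (algebraMap F E)) : LinearIndependent F ![1, d, d ^ 2] := by
  have : FiniteDimensional F E := Module.finite_of_finrank_eq_succ h3
  have htop : F⟮d⟯ = ⊤ := by
    have := isSimpleOrder_of_finrank_prime F E (h3 ▸ Nat.prime_three)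
    refine (eq_bot_or_eq_top F⟮d⟯).resolve_left fun hbot => hd ?_
    rw [← mem_bot, ← hbot]
    exact mem_adjoin_simple_self F d
  have hdeg : (minpoly F d).natDegree = 3 := by
    rw [← adjoin.finrank (IsIntegral.of_finite F d), htop, finrank_top', h3]
  have hpow := linearIndependent_pow (K := F) d
  rw [hdeg] at hpow
  convert hpow using 1
  ext i
  fin_cases i <;> simp

theorem exists_eq_add_mul_add_mul_sq (h3 : finrank F E = 3) {d : E}
    (hindep : LinearIndependent F ![1, d, d ^ 2]) (x : E) :
    ∃ c₀ c₁ c₂ : F,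
      x = algebraMap F E c₀ + algebraMap F E c₁ * d + algebraMap F E c₂ * d ^ 2 := by
  have : FiniteDimensional F E := Module.finite_of_finrank_eq_succ h3
  have hx : x ∈ Submodule.span F (Set.range ![1, d, d ^ 2]) := by
    rw [hindep.span_eq_top_of_card_eq_finrank (by simp [h3])]
    trivial
  obtain ⟨c, hc⟩ := (Submodule.mem_span_range_iff_exists_fun F).mp hx
  refine ⟨c 0, c 1, c 2, ?_⟩
  rw [← hc, Fin.sum_univ_three]
  simp [Algebra.smul_def]

theorem coeffs_eq_of_add_mul_add_mul_sq_eq {d : E} (hindep : LinearIndependent F ![1, d, d ^ 2])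
    {c₀ c₁ c₂ c₀' c₁' c₂' : F}
    (h : algebraMap F E c₀ + algebraMap F E c₁ * d + algebraMap F E c₂ * d ^ 2 =
      algebraMap F E c₀' + algebraMap F E c₁' * d + algebraMap F E c₂' * d ^ 2) :
    c₀ = c₀' ∧ c₁ = c₁' ∧ c₂ = c₂' := by
  have := Fintype.linearIndependent_iffₛ.mp hindep ![c₀, c₁, c₂] ![c₀', c₁', c₂']
    (by simpa [Fin.sum_univ_three, Algebra.smul_def] using h)
  exact ⟨this 0, this 1, this 2⟩

theorem mul_sub_mul_ne_zero_of_linearIndependent {d α β : E}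
    (hz : LinearIndependent F ![1, α, β]) {a₀ a₁ a₂ b₀ b₁ b₂ : F}
    (hα : α = algebraMap F E a₀ + algebraMap F E a₁ * d + algebraMap F E a₂ * d ^ 2)
    (hβ : β = algebraMap F E b₀ + algebraMap F E b₁ * d + algebraMap F E b₂ * d ^ 2) :
    a₁ * b₂ - a₂ * b₁ ≠ 0 := by
  intro hdet
  obtain ⟨v, hv0, hv⟩ := (Matrix.exists_mulVec_eq_zero_iff (M := !![a₁, b₁; a₂, b₂])).mpr
    (by rw [Matrix.det_fin_two_of]; linear_combination hdet)
  have h₁ : algebraMap F E a₁ * algebraMap F E (v 0) + algebraMap F E b₁ * algebraMap F E (v 1)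
      = 0 := by
    simpa [Matrix.mulVec, dotProduct] using congrArg (algebraMap F E) (congrFun hv 0)
  have h₂ : algebraMap F E a₂ * algebraMap F E (v 0) + algebraMap F E b₂ * algebraMap F E (v 1)
      = 0 := by
    simpa [Matrix.mulVec, dotProduct] using congrArg (algebraMap F E) (congrFun hv 1)
  -- `v 0 • α + v 1 • β` lies in `F`
  have hv' := Fintype.linearIndependent_iff.mp hz ![-(v 0 * a₀ + v 1 * b₀), v 0, v 1] (by
    simp only [Fin.sum_univ_three, Algebra.smul_def, hα, hβ, Matrix.cons_val_zero,
      Matrix.cons_val_one, Matrix.cons_val, map_add, map_neg, map_mul, mul_one]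
    linear_combination d * h₁ + d ^ 2 * h₂)
  exact hv0 (funext fun i => by fin_cases i; exacts [hv' 1, hv' 2])

theorem det_fin_three_of_upper {M : Matrix (Fin 3) (Fin 3) F} (h10 : M 1 0 = 0) (h20 : M 2 0 = 0)
    (h21 : M 2 1 = 0) : M.det = M 0 0 * M 1 1 * M 2 2 := by
  rw [Matrix.det_fin_three, h10, h20, h21]
  ring

theorem mact_snd_of_upper {M : Matrix (Fin 3) (Fin 3) F} (h10 : M 1 0 = 0) (h20 : M 2 0 = 0)
    (h21 : M 2 1 = 0) (w : E × E) :
    (mact F E M w).2 = (algebraMap F E (M 1 1) * w.2 + algebraMap F E (M 1 2)) /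
      algebraMap F E (M 2 2) := by
  simp [mact, mden, h10, h20, h21]

theorem exists_upper_mact_eq {p q r s t : F} (hp : p ≠ 0) (hs : s ≠ 0) (w : E × E) :
    ∃ m : GL (Fin 3) F, (m.val 1 0 = 0 ∧ m.val 2 0 = 0 ∧ m.val 2 1 = 0) ∧
      mact F E m.val w = (algebraMap F E p * w.1 + algebraMap F E q * w.2 + algebraMap F E r,
        algebraMap F E s * w.2 + algebraMap F E t) := by
  refine ⟨.mkOfDetNeZero !![p, q, r; 0, s, t; 0, 0, 1] ?_, ?_, ?_⟩
  · simp [Matrix.det_fin_three, hp, hs]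
  · simp [Matrix.GeneralLinearGroup.mkOfDetNeZero]
  · simp [Matrix.GeneralLinearGroup.mkOfDetNeZero, mact, mden]

open Classical in
noncomputable def borelRep (d : E) (b₁ b₂ : F) : E × E :=
  if b₂ = 0 then (d ^ 2, d) else (d, algebraMap F E (b₁ / b₂) * d + d ^ 2)

theorem borelRep_mem (d : E) (b₁ b₂ : F) :
    (∃ v : F, borelRep d b₁ b₂ = (d, algebraMap F E v * d + d ^ 2)) ∨
      borelRep d b₁ b₂ = (d ^ 2, d) := by
  unfold borelRep
  split_ifs
  exacts [.inr rfl, .inl ⟨_, rfl⟩]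

theorem exists_upper_mact_borelRep_eq {d : E} {z : E × E} {a₀ a₁ a₂ b₀ b₁ b₂ : F}
    (hα : z.1 = algebraMap F E a₀ + algebraMap F E a₁ * d + algebraMap F E a₂ * d ^ 2)
    (hβ : z.2 = algebraMap F E b₀ + algebraMap F E b₁ * d + algebraMap F E b₂ * d ^ 2)
    (hdet : a₁ * b₂ - a₂ * b₁ ≠ 0) :
    ∃ m : GL (Fin 3) F, (m.val 1 0 = 0 ∧ m.val 2 0 = 0 ∧ m.val 2 1 = 0) ∧
      mact F E m.val (borelRep d b₁ b₂) = z := by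
  unfold borelRep
  split_ifs with hb₂
  · subst hb₂
    obtain ⟨m, hm, hact⟩ := exists_upper_mact_eq (E := E) (q := a₁) (r := a₀) (t := b₀)
      (p := a₂) (s := b₁) (by rintro rfl; simp at hdet) (by rintro rfl; simp at hdet) (d ^ 2, d)
    refine ⟨m, hm, hact.trans (Prod.ext ?_ ?_)⟩
    · rw [hα]; ring
    · rw [hβ]; simp [add_comm]
  · set v := b₁ / b₂
    have hv : algebraMap F E b₂ * algebraMap F E v = algebraMap F E b₁ := by
      rw [← map_mul, mul_div_cancel₀ _ hb₂]
    have hp : a₁ - a₂ * v ≠ 0 := by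
      rintro hp
      apply hdet
      rw [← mul_div_cancel₀ b₁ hb₂]
      linear_combination b₂ * hp
    obtain ⟨m, hm, hact⟩ := exists_upper_mact_eq (E := E) (q := a₂) (r := a₀) (t := b₀)
      hp hb₂ (d, algebraMap F E v * d + d ^ 2)
    refine ⟨m, hm, hact.trans (Prod.ext ?_ ?_)⟩
    · rw [hα, map_sub, map_mul]; ring
    · rw [hβ]; linear_combination d * hv

theorem eq_borelRep_of_mact_eq {d : E} (hindep : LinearIndependent F ![1, d, d ^ 2])
    {w : E × E} (hw : (∃ v : F, w = (d, algebraMap F E v * d + d ^ 2)) ∨ w = (d ^ 2, d))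
    {M : Matrix (Fin 3) (Fin 3) F} (h10 : M 1 0 = 0) (h20 : M 2 0 = 0) (h21 : M 2 1 = 0)
    (hdet : M.det ≠ 0) {b₀ b₁ b₂ : F}
    (hβ : (mact F E M w).2 =
      algebraMap F E b₀ + algebraMap F E b₁ * d + algebraMap F E b₂ * d ^ 2) :
    w = borelRep d b₁ b₂ := by
  rw [det_fin_three_of_upper h10 h20 h21] at hdet
  have h11 : M 1 1 ≠ 0 := right_ne_zero_of_mul (left_ne_zero_of_mul hdet)
  have h22 : M 2 2 ≠ 0 := right_ne_zero_of_mul hdet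
  rw [mact_snd_of_upper h10 h20 h21, div_eq_iff ((map_ne_zero _).mpr h22)] at hβ
  rcases hw with ⟨v, rfl⟩ | rfl
  · obtain ⟨-, hv, h2⟩ := coeffs_eq_of_add_mul_add_mul_sq_eq hindep (c₀ := M 1 2)
      (c₁ := M 1 1 * v) (c₂ := M 1 1) (c₀' := b₀ * M 2 2) (c₁' := b₁ * M 2 2)
      (c₂' := b₂ * M 2 2) (by simp only [map_mul] at hβ ⊢; linear_combination hβ)
    have hb₂ : b₂ ≠ 0 := by rintro rfl; simp [h11] at h2
    have hv₂ : v = b₁ / b₂ := by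
      refine (eq_div_iff hb₂).mpr (mul_right_cancel₀ h22 ?_)
      linear_combination hv - v * h2
    rw [borelRep, if_neg hb₂, hv₂]
  · obtain ⟨-, -, h2⟩ := coeffs_eq_of_add_mul_add_mul_sq_eq hindep
      (c₀ := M 1 2) (c₁ := M 1 1) (c₂ := 0) (c₀' := b₀ * M 2 2) (c₁' := b₁ * M 2 2)
      (c₂' := b₂ * M 2 2) (by simp only [map_mul, map_zero] at hβ ⊢; linear_combination hβ)
    rw [borelRep, if_pos ((mul_eq_zero.mp h2.symm).resolve_right h22)]

end

theorem fundamental_domain_borel_general (F : Type*) [Field F]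
    (E : Type*) [Field E] [Algebra F E] (h3 : Module.finrank F E = 3)
    (δ : F) (hδ : ¬∃ x : F, x ^ 3 = δ) (d : E) (hd : d ^ 3 = algebraMap F E δ) :
    ∀ z ∈ UHS F E, ∃! w : E × E,
      (w ∈ {z' : E × E | ∃ v : F, z' = (d, algebraMap F E v * d + d ^ 2)} ∪
            {(d ^ 2, d)}) ∧
      ∃ m : GL (Fin 3) F,
        (m.val 1 0 = 0 ∧ m.val 2 0 = 0 ∧ m.val 2 1 = 0) ∧
        mact F E m.val w = z := by
  intro z hz
  have hindep : LinearIndependent F ![1, d, d ^ 2] := by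
    refine linearIndependent_one_self_sq_of_finrank_eq_three h3 ?_
    rintro ⟨x, rfl⟩
    exact hδ ⟨x, (algebraMap F E).injective (by rw [map_pow, hd])⟩
  obtain ⟨a₀, a₁, a₂, hα⟩ := exists_eq_add_mul_add_mul_sq h3 hindep z.1
  obtain ⟨b₀, b₁, b₂, hβ⟩ := exists_eq_add_mul_add_mul_sq h3 hindep z.2
  refine ⟨borelRep d b₁ b₂, ⟨borelRep_mem d b₁ b₂, exists_upper_mact_borelRep_eq hα hβ
    (mul_sub_mul_ne_zero_of_linearIndependent hz hα hβ)⟩, ?_⟩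
  rintro w ⟨hw, m, ⟨h10, h20, h21⟩, rfl⟩
  exact eq_borelRep_of_mact_eq hindep hw h10 h20 h21 m.det_ne_zero hβ

theorem fundamental_domain_borel (F : Type*) [Field F] [Fintype F]
    (E : Type*) [Field E] [Algebra F E] (h3 : Module.finrank F E = 3)
    (δ : F) (hδ : ¬∃ x : F, x ^ 3 = δ) (d : E) (hd : d ^ 3 = algebraMap F E δ) :
    ∀ z ∈ UHS F E, ∃! w : E × E,
      (w ∈ {z' : E × E | ∃ v : F, z' = (d, algebraMap F E v * d + d ^ 2)} ∪
            {(d ^ 2, d)}) ∧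
      ∃ m : GL (Fin 3) F,
        (m.val 1 0 = 0 ∧ m.val 2 0 = 0 ∧ m.val 2 1 = 0) ∧
        mact F E m.val w = z :=
  fundamental_domain_borel_general F E h3 δ hδ d hd
end

section
/- Let T be the subgroup of diagonal invertible matrices in GL₃(F). Then the set D = {(x + d + y·d², r + s·d + d²) : x, y, r, s ∈ F, ys ≠ 1} ∪ {(x + d², r + d + s·d²) : x, r ∈ F, s ∈ F×} ∪ {(x + y·d + d², r + d) : x, r ∈ F, y ∈ F×} ∪ {(x + d², y + d) : x, y ∈ F} is a fundamental domain for the action of T on H_q: every (α, β) ∈ H_q lies in the T-orbit of exactly one element of D. -/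
/-!
The diagonal torus acts on `H_q` by `(α, β) ↦ (a α, b β)` with `a, b ∈ F×`, so only the
coefficients of `d` and `d²` matter. Writing `α = a₀ + a₁ d + a₂ d²` and `β = b₀ + b₁ d + b₂ d²`,
membership in `H_q` says exactly `a₁ b₂ ≠ a₂ b₁`. If `a₁ b₂ ≠ 0` we scale so that `a₁ = b₂ = 1`;
otherwise `a₂ b₁ ≠ 0` and we scale so that `a₂ = b₁ = 1`. Which case occurs is invariant under
the torus, and the normalized pairs are exactly the elements of `D`.
-/

section TorusNormalForm

variable {K V : Type*} [Field K] [AddCommGroup V] [Module K V] (f g : V →ₗ[K] K)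

def IsTorusNormal (w : V × V) : Prop :=
  (f w.1 = 1 ∧ g w.2 = 1 ∧ g w.1 * f w.2 ≠ 1) ∨
    (g w.1 = 1 ∧ f w.2 = 1 ∧ (f w.1 = 0 ∨ g w.2 = 0))

open Classical in
noncomputable def torusNormalize (w : V × V) : V × V :=
  if f w.1 ≠ 0 ∧ g w.2 ≠ 0 then ((f w.1)⁻¹ • w.1, (g w.2)⁻¹ • w.2)
  else ((g w.1)⁻¹ • w.1, (f w.2)⁻¹ • w.2)

variable {f g}

lemma torusNormalize_smul {a b : K} (ha : a ≠ 0) (hb : b ≠ 0) (w : V × V) :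
    torusNormalize f g (a • w.1, b • w.2) = torusNormalize f g w := by
  have hcond : f (a • w.1) ≠ 0 ∧ g (b • w.2) ≠ 0 ↔ f w.1 ≠ 0 ∧ g w.2 ≠ 0 := by simp [ha, hb]
  unfold torusNormalize
  split_ifs with h₁ h₂ h₂
  · simp [smul_smul, ha, hb]
  · exact absurd (hcond.mp h₁) h₂
  · exact absurd (hcond.mpr h₂) h₁
  · simp [smul_smul, ha, hb]

lemma IsTorusNormal.torusNormalize_eq {w : V × V} (h : IsTorusNormal f g w) :
    torusNormalize f g w = w := by
  rcases h with ⟨h1, h2, -⟩ | ⟨h1, h2, hdeg⟩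
  · simp [torusNormalize, h1, h2]
  · have : ¬(f w.1 ≠ 0 ∧ g w.2 ≠ 0) := by tauto
    simp [torusNormalize, this, h1, h2]

variable {w : V × V} (hw : f w.1 * g w.2 ≠ g w.1 * f w.2)
include hw

lemma g_fst_mul_f_snd_ne_zero (hgen : ¬(f w.1 ≠ 0 ∧ g w.2 ≠ 0)) : g w.1 * f w.2 ≠ 0 := by
  intro h
  apply hw
  rw [h, mul_eq_zero]
  tauto

lemma isTorusNormal_torusNormalize : IsTorusNormal f g (torusNormalize f g w) := by
  unfold torusNormalize
  split_ifs with hgen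
  · left
    refine ⟨by simp [hgen.1], by simp [hgen.2], ?_⟩
    simp only [map_smul, smul_eq_mul]
    intro h
    apply hw
    field_simp at h
    exact ((div_eq_one_iff_eq (mul_ne_zero hgen.1 hgen.2)).mp h).symm
  · have hne := g_fst_mul_f_snd_ne_zero hw hgen
    right
    refine ⟨by simp [left_ne_zero_of_mul hne], by simp [right_ne_zero_of_mul hne], ?_⟩
    simp only [LinearMap.map_smul, smul_eq_mul, mul_eq_zero, inv_eq_zero]
    tauto

lemma exists_smul_torusNormalize :
    ∃ a b : K, a ≠ 0 ∧ b ≠ 0 ∧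
      w = (a • (torusNormalize f g w).1, b • (torusNormalize f g w).2) := by
  unfold torusNormalize
  split_ifs with hgen
  · exact ⟨f w.1, g w.2, hgen.1, hgen.2, by simp [smul_smul, hgen.1, hgen.2]⟩
  · have h := g_fst_mul_f_snd_ne_zero hw hgen
    exact ⟨g w.1, f w.2, left_ne_zero_of_mul h, right_ne_zero_of_mul h,
      by simp [smul_smul, left_ne_zero_of_mul h, right_ne_zero_of_mul h]⟩

theorem existsUnique_isTorusNormal :
    ∃! w' : V × V, IsTorusNormal f g w' ∧ ∃ a b : K, a ≠ 0 ∧ b ≠ 0 ∧ w = (a • w'.1, b • w'.2) :=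
  ⟨torusNormalize f g w, ⟨isTorusNormal_torusNormalize hw, exists_smul_torusNormalize hw⟩,
    fun w' ⟨hw', a, b, ha, hb, hww'⟩ => by
      rw [hww', torusNormalize_smul ha hb, hw'.torusNormalize_eq]⟩

end TorusNormalForm

section DiagonalAction

variable {F : Type*} [Field F] {E : Type*} [Field E] [Algebra F E]

lemma mact_diagonal (v : Fin 3 → F) (w : E × E) :
    mact F E (Matrix.diagonal v) w = ((v 0 / v 2) • w.1, (v 1 / v 2) • w.2) := by
  ext <;> simp [mact, mden, Algebra.smul_def, div_eq_mul_inv] <;> ring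

lemma exists_diagonal_mact_eq_iff {w z : E × E} :
    (∃ m : GL (Fin 3) F, (∀ i j : Fin 3, i ≠ j → m.val i j = 0) ∧ mact F E m.val w = z) ↔
      ∃ a b : F, a ≠ 0 ∧ b ≠ 0 ∧ z = (a • w.1, b • w.2) := by
  constructor
  · rintro ⟨m, hm, rfl⟩
    have hdiag : Matrix.diagonal m.val.diag = m.val := Matrix.IsDiag.diagonal_diag hm
    have hdet := m.det_ne_zero
    rw [← hdiag, Matrix.det_diagonal, Fin.prod_univ_three] at hdet
    simp only [mul_ne_zero_iff] at hdet
    refine ⟨_, _, div_ne_zero hdet.1.1 hdet.2, div_ne_zero hdet.1.2 hdet.2, ?_⟩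
    rw [← hdiag, mact_diagonal]
    rfl
  · rintro ⟨a, b, ha, hb, rfl⟩
    refine ⟨Matrix.GeneralLinearGroup.mkOfDetNeZero (Matrix.diagonal ![a, b, 1])
      (by simp [Fin.prod_univ_three, ha, hb]), fun i j hij => Matrix.diagonal_apply_ne _ hij, ?_⟩
    simp [mact_diagonal]

end DiagonalAction

section CubeRootBasis

variable {F : Type*} [Field F] {E : Type*} [Field E] [Algebra F E]

open Polynomial in
lemma linearIndependent_one_cubeRoot_sq {δ : F} (hδ : ¬∃ x : F, x ^ 3 = δ) {d : E}
    (hd : d ^ 3 = algebraMap F E δ) : LinearIndependent F ![1, d, d ^ 2] := by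
  have hirr : Irreducible (X ^ 3 - C δ) :=
    X_pow_sub_C_irreducible_of_prime Nat.prime_three fun b hb => hδ ⟨b, hb⟩
  have hmin : minpoly F d = X ^ 3 - C δ :=
    (minpoly.eq_of_irreducible_of_monic hirr (by simp [hd])
      (monic_X_pow_sub_C δ three_ne_zero)).symm
  have h := linearIndependent_pow (K := F) d
  rw [hmin, natDegree_X_pow_sub_C] at h
  convert h using 1
  funext i
  fin_cases i <;> simp

variable (F E) in
def torusDomain (d : E) : Set (E × E) :=
  {z' : E × E | ∃ x y r s : F, y * s ≠ 1 ∧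
      z' = (algebraMap F E x + d + algebraMap F E y * d ^ 2,
            algebraMap F E r + algebraMap F E s * d + d ^ 2)} ∪
    {z' : E × E | ∃ x r s : F, s ≠ 0 ∧
      z' = (algebraMap F E x + d ^ 2,
            algebraMap F E r + d + algebraMap F E s * d ^ 2)} ∪
    {z' : E × E | ∃ x r y : F, y ≠ 0 ∧
      z' = (algebraMap F E x + algebraMap F E y * d + d ^ 2,
            algebraMap F E r + d)} ∪
    {z' : E × E | ∃ x y : F,
      z' = (algebraMap F E x + d ^ 2, algebraMap F E y + d)}

lemma Module.Basis.repr_algebraMap_mul {ι : Type*} (B : Module.Basis ι F E) (x : F) (ξ : E) :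
    B.repr (algebraMap F E x * ξ) = x • B.repr ξ := by
  rw [← Algebra.smul_def, map_smul]

variable {d : E} {B : Module.Basis (Fin 3) F E} (hB : ⇑B = ![1, d, d ^ 2])
include hB

lemma repr_one : B.repr 1 = Finsupp.single 0 1 := by
  rw [show (1 : E) = B 0 by simp [hB], B.repr_self]

lemma repr_cubeRoot : B.repr d = Finsupp.single 1 1 := by
  rw [show d = B 1 by simp [hB], B.repr_self]

lemma repr_cubeRoot_sq : B.repr (d ^ 2) = Finsupp.single 2 1 := by
  rw [show d ^ 2 = B 2 by simp [hB], B.repr_self]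

lemma repr_algebraMap (x : F) : B.repr (algebraMap F E x) = Finsupp.single 0 x := by
  rw [← mul_one (algebraMap F E x), B.repr_algebraMap_mul, repr_one hB, Finsupp.smul_single,
    smul_eq_mul, mul_one]

lemma eq_algebraMap_coord_add (ξ : E) :
    ξ = algebraMap F E (B.coord 0 ξ) + algebraMap F E (B.coord 1 ξ) * d +
      algebraMap F E (B.coord 2 ξ) * d ^ 2 := by
  conv_lhs => rw [← B.sum_repr ξ]
  simp [Fin.sum_univ_three, hB, Algebra.smul_def]

lemma coord_mul_ne_of_mem_UHS {z : E × E} (hz : z ∈ UHS F E) :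
    B.coord 1 z.1 * B.coord 2 z.2 ≠ B.coord 2 z.1 * B.coord 1 z.2 := by
  let A : Matrix (Fin 3) (Fin 3) F := Matrix.of fun i => B.equivFun (![1, z.1, z.2] i)
  have hrows : LinearIndependent F fun i => A i :=
    hz.map' B.equivFun.toLinearMap B.equivFun.ker
  have hdet : A.det ≠ 0 := ((Matrix.isUnit_iff_isUnit_det A).mp
    (Matrix.linearIndependent_rows_iff_isUnit.mp hrows)).ne_zero
  rw [Matrix.det_fin_three] at hdet
  simp only [A, Matrix.of_apply, Module.Basis.equivFun_apply, ← Module.Basis.coord_apply,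
    Matrix.cons_val_zero, Matrix.cons_val_one, Matrix.cons_val_two, Matrix.head_cons,
    Matrix.tail_cons] at hdet
  simp only [Module.Basis.coord_apply, repr_one hB, Finsupp.single_eq_same, ne_eq, Fin.reduceEq,
    not_false_eq_true, Finsupp.single_eq_of_ne, zero_mul, sub_zero, add_zero, one_mul] at hdet
  exact fun h => hdet (sub_eq_zero.mpr h)

lemma mem_torusDomain_iff {w : E × E} :
    w ∈ torusDomain F E d ↔ IsTorusNormal (B.coord 1) (B.coord 2) w := by
  simp only [torusDomain, Set.mem_union, Set.mem_ofPred_eq]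
  constructor
  · rintro (((⟨x, y, r, s, hys, rfl⟩ | ⟨x, r, s, hs, rfl⟩) | ⟨x, r, y, hy, rfl⟩) | ⟨x, y, rfl⟩) <;>
      simp [IsTorusNormal, repr_algebraMap hB, repr_cubeRoot hB, repr_cubeRoot_sq hB,
        B.repr_algebraMap_mul, *]
  · obtain ⟨α, β⟩ := w
    simp only [IsTorusNormal]
    rintro (⟨hα, hβ, hdet⟩ | ⟨hα, hβ, hdeg⟩) <;>
      rw [eq_algebraMap_coord_add hB α, eq_algebraMap_coord_add hB β]
    · exact Or.inl (Or.inl (Or.inl ⟨B.coord 0 α, _, B.coord 0 β, _, hdet, by rw [hα, hβ]; simp⟩))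
    · rcases em (B.coord 1 α = 0) with hα₁ | hα₁ <;> rcases em (B.coord 2 β = 0) with hβ₂ | hβ₂
      · exact Or.inr ⟨B.coord 0 α, B.coord 0 β, by rw [hα, hβ, hα₁, hβ₂]; simp⟩
      · exact Or.inl (Or.inl (Or.inr ⟨B.coord 0 α, B.coord 0 β, _, hβ₂, by rw [hα, hβ, hα₁]; simp⟩))
      · exact Or.inl (Or.inr ⟨B.coord 0 α, B.coord 0 β, _, hα₁, by rw [hα, hβ, hβ₂]; simp⟩)
      · exact absurd hdeg (by tauto)

end CubeRootBasis

theorem fundamental_domain_torus_general (F : Type*) [Field F]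
    (E : Type*) [Field E] [Algebra F E] (h3 : Module.finrank F E = 3)
    (δ : F) (hδ : ¬∃ x : F, x ^ 3 = δ) (d : E) (hd : d ^ 3 = algebraMap F E δ) :
    ∀ z ∈ UHS F E, ∃! w : E × E,
      (w ∈ {z' : E × E | ∃ x y r s : F, y * s ≠ 1 ∧
              z' = (algebraMap F E x + d + algebraMap F E y * d ^ 2,
                    algebraMap F E r + algebraMap F E s * d + d ^ 2)} ∪
            {z' : E × E | ∃ x r s : F, s ≠ 0 ∧
              z' = (algebraMap F E x + d ^ 2,
                    algebraMap F E r + d + algebraMap F E s * d ^ 2)} ∪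
            {z' : E × E | ∃ x r y : F, y ≠ 0 ∧
              z' = (algebraMap F E x + algebraMap F E y * d + d ^ 2,
                    algebraMap F E r + d)} ∪
            {z' : E × E | ∃ x y : F,
              z' = (algebraMap F E x + d ^ 2, algebraMap F E y + d)}) ∧
      ∃ m : GL (Fin 3) F,
        (∀ i j : Fin 3, i ≠ j → m.val i j = 0) ∧
        mact F E m.val w = z := by
  intro z hz
  have hli := linearIndependent_one_cubeRoot_sq hδ hd
  let B : Module.Basis (Fin 3) F E :=
    basisOfLinearIndependentOfCardEqFinrank hli (by simp [h3])
  have hB : ⇑B = ![1, d, d ^ 2] := coe_basisOfLinearIndependentOfCardEqFinrank hli _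
  refine (existsUnique_congr fun w => ?_).mp
    (existsUnique_isTorusNormal (coord_mul_ne_of_mem_UHS hB hz))
  exact and_congr (mem_torusDomain_iff hB).symm exists_diagonal_mact_eq_iff.symm

theorem fundamental_domain_torus (F : Type*) [Field F] [Fintype F]
    (E : Type*) [Field E] [Algebra F E] (h3 : Module.finrank F E = 3)
    (δ : F) (hδ : ¬∃ x : F, x ^ 3 = δ) (d : E) (hd : d ^ 3 = algebraMap F E δ) :
    ∀ z ∈ UHS F E, ∃! w : E × E,
      (w ∈ {z' : E × E | ∃ x y r s : F, y * s ≠ 1 ∧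
              z' = (algebraMap F E x + d + algebraMap F E y * d ^ 2,
                    algebraMap F E r + algebraMap F E s * d + d ^ 2)} ∪
            {z' : E × E | ∃ x r s : F, s ≠ 0 ∧
              z' = (algebraMap F E x + d ^ 2,
                    algebraMap F E r + d + algebraMap F E s * d ^ 2)} ∪
            {z' : E × E | ∃ x r y : F, y ≠ 0 ∧
              z' = (algebraMap F E x + algebraMap F E y * d + d ^ 2,
                    algebraMap F E r + d)} ∪
            {z' : E × E | ∃ x y : F,
              z' = (algebraMap F E x + d ^ 2, algebraMap F E y + d)}) ∧
      ∃ m : GL (Fin 3) F,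
        (∀ i j : Fin 3, i ≠ j → m.val i j = 0) ∧
        mact F E m.val w = z :=
  fundamental_domain_torus_general F E h3 δ hδ d hd
end
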